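/- arXiv:1601.05377 — 4 statements merged into one kernel-verified Lean document; each statement's English description precedes it below -/
import Mathlib

section
/- For a source defined on a weighted graph G = (M, w) (all hyperedges have size exactly 2), and for any partition P of M into at least two parts, the quantity I_P(X_M) := (1/(|P|−1))[Σ_{A ∈ P} H(X_A) − H(X_M)] equals (1/(|P|−1)) Σ_{e ∈ E_P} w(e), where E_P is the set of edges of G not contained within any single part of P. -/
open Finset
open scoped Classical

lemma part_count {M : Type*} [Fintype M] [DecidableEq M]
    (P : Finpartition (Finset.univ : Finset M)) (e : Finset M) (he : e.card = 2) :
    (P.parts.filter fun A => (e ∩ A).Nonempty).card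
      = if ∃ A ∈ P.parts, e ⊆ A then 1 else 2 := by
  obtain ⟨a, b, hab, rfl⟩ := Finset.card_eq_two.mp he
  obtain ⟨Aa, hAa, haA⟩ := P.exists_mem (mem_univ a)
  obtain ⟨Ab, hAb, hbA⟩ := P.exists_mem (mem_univ b)
  have hfilter : P.parts.filter (fun A => (({a,b} : Finset M) ∩ A).Nonempty) = {Aa, Ab} := by
    ext A
    simp only [mem_filter, mem_insert, mem_singleton]
    constructor
    · rintro ⟨hA, x, hx⟩
      rw [mem_inter, mem_insert, mem_singleton] at hx
      rcases hx with ⟨h1 | h1, h2⟩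
      · subst h1; exact Or.inl (P.eq_of_mem_parts hA hAa h2 haA)
      · subst h1; exact Or.inr (P.eq_of_mem_parts hA hAb h2 hbA)
    · rintro (rfl | rfl)
      · exact ⟨hAa, a, by simp [haA]⟩
      · exact ⟨hAb, b, by simp [hbA]⟩
  rw [hfilter]
  by_cases h : Aa = Ab
  · subst h
    rw [if_pos ⟨Aa, hAa, by
      intro x hx
      rcases mem_insert.mp hx with rfl | hx
      · exact haA
      · rw [mem_singleton] at hx; subst hx; exact hbA⟩]
    simp
  · rw [if_neg, card_insert_of_notMem (by simp [h]), card_singleton]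
    rintro ⟨A, hA, hsub⟩
    exact h ((P.eq_of_mem_parts hAa hA haA (hsub (by simp))).trans
      (P.eq_of_mem_parts hA hAb (hsub (by simp)) hbA))

/-- For a graphical source (all edges of size 2) and a partition `P` of the
vertex set with at least two parts, `I_P(X_M) = (1/(|P|-1)) (∑_{A ∈ P} H(X_A) - H(X_M))`
equals `(1/(|P|-1)) ∑_{e ∈ E_P} w e`, where `E_P` is the set of edges not contained in any
single part of `P`, and `H(X_A) = ∑_{e ∈ E, e ∩ A ≠ ∅} w e`. -/
theorem graphical_IP_formula {M : Type*} [Fintype M] [DecidableEq M]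
    (w : Finset M → ℝ) (hw : ∀ e, 0 ≤ w e)
    (h2 : ∀ e, 0 < w e → e.card = 2)
    (P : Finpartition (Finset.univ : Finset M)) (hP : 2 ≤ P.parts.card) :
    ((P.parts.card : ℝ) - 1)⁻¹ *
      ((∑ A ∈ P.parts, ∑ e ∈ Finset.univ.filter
          (fun e : Finset M => 0 < w e ∧ (e ∩ A).Nonempty), w e) -
        ∑ e ∈ Finset.univ.filter
          (fun e : Finset M => 0 < w e ∧ (e ∩ (Finset.univ : Finset M)).Nonempty), w e) =
    ((P.parts.card : ℝ) - 1)⁻¹ *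
      ∑ e ∈ Finset.univ.filter
          (fun e : Finset M => 0 < w e ∧ ¬ ∃ A ∈ P.parts, e ⊆ A), w e := by
  congr 1
  set S := Finset.univ.filter (fun e : Finset M => 0 < w e) with hS
  have hne : ∀ e ∈ S, e.Nonempty := by
    intro e he
    rw [hS, mem_filter] at he
    exact Finset.card_pos.mp (by rw [h2 e he.2]; norm_num)
  have h1 : Finset.univ.filter (fun e : Finset M => 0 < w e ∧ (e ∩ (Finset.univ : Finset M)).Nonempty) = S := by
    ext e
    simp only [mem_filter, mem_univ, true_and, inter_univ, hS]
    exact ⟨fun h => h.1, fun h => ⟨h, hne e (by simp [hS, h])⟩⟩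
  have h2' : ∀ A : Finset M, Finset.univ.filter (fun e : Finset M => 0 < w e ∧ (e ∩ A).Nonempty)
      = S.filter (fun e => (e ∩ A).Nonempty) := by
    intro A; ext e; simp [hS, and_comm]
  have h3 : Finset.univ.filter (fun e : Finset M => 0 < w e ∧ ¬ ∃ A ∈ P.parts, e ⊆ A)
      = S.filter (fun e => ¬ ∃ A ∈ P.parts, e ⊆ A) := by
    ext e; simp [hS]
  rw [h1, h3]
  have key : (∑ A ∈ P.parts, ∑ e ∈ Finset.univ.filter (fun e : Finset M => 0 < w e ∧ (e ∩ A).Nonempty), w e) = ∑ e ∈ S, ((if ∃ A ∈ P.parts, e ⊆ A then 1 else 2 : ℕ) : ℝ) * w e := by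
    trans (∑ e ∈ S, ∑ A ∈ P.parts, if (e ∩ A).Nonempty then w e else 0)
    · rw [← Finset.sum_comm]
      exact Finset.sum_congr rfl fun A _ => by rw [h2' A, Finset.sum_filter]
    · refine Finset.sum_congr rfl fun e he => ?_
      rw [← Finset.sum_filter, Finset.sum_const, nsmul_eq_mul,
        part_count P e (h2 e (mem_filter.mp he).2)]
  rw [key, ← Finset.sum_sub_distrib, eq_comm, Finset.sum_filter]
  refine Finset.sum_congr rfl fun e he => ?_
  by_cases h : ∃ A ∈ P.parts, e ⊆ A <;> simp only [h, if_true, if_false,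
    not_true, not_false_iff, Nat.cast_one, Nat.cast_ofNat] <;> ring
end

section
/- Let (M, w) be a weighted hypergraph and define, for a nonnegative vector x indexed by subsets of M with x ≤ w coordinatewise, C(x) := Σ_e x(e) − min{Σ_i r_i : r ∈ ℝ^M≥0, Σ_{i∈B} r_i ≥ Σ_{e⊆B} x(e) for all B ⊊ M}. Then the set Γ of fractional packings x ≤ w for which there exists r with Σ_{i∈B} r_i ≥ Σ_{e⊆B} x(e) for all B ⊊ M and Σ_e x(e) − Σ_i r_i = C(w), equals the set Γ* of fractional packings x ≤ w with C(x) = C(w). -/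
open Finset
open scoped Classical

/-- A rate vector `r` is feasible for the omniscience region of the hypergraphical source with
weight vector `x`: `r ≥ 0` and `∑_{i ∈ B} r i ≥ ∑_{e ⊆ B} x e` for every proper `B ⊊ M`. -/
def OmniFeasible {M : Type*} [Fintype M] [DecidableEq M]
    (x : Finset M → ℝ) (r : M → ℝ) : Prop :=
  (∀ i, 0 ≤ r i) ∧
    ∀ B : Finset M, B ⊂ Finset.univ →
      ∑ e ∈ Finset.univ.filter (fun e : Finset M => e ⊆ B), x e ≤ ∑ i ∈ B, r i

/-- The minimum rate of communication for omniscience `R_CO(x)`. -/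
noncomputable def RCO {M : Type*} [Fintype M] [DecidableEq M] (x : Finset M → ℝ) : ℝ :=
  sInf {s : ℝ | ∃ r : M → ℝ, OmniFeasible x r ∧ s = ∑ i : M, r i}

/-- The secret key capacity of the hypergraphical source with weights `x`,
via the omniscience characterization `C(x) = ∑_e x e - R_CO(x)`. -/
noncomputable def skCap {M : Type*} [Fintype M] [DecidableEq M] (x : Finset M → ℝ) : ℝ :=
  (∑ e : Finset M, x e) - RCO x

section Aux
variable {M : Type*} [Fintype M] [DecidableEq M]

lemma omni_nonempty (x : Finset M → ℝ) (hx : ∀ e, 0 ≤ x e) (hx0 : x ∅ = 0) :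
    ∃ r : M → ℝ, OmniFeasible x r := by
  refine ⟨fun _ => ∑ e : Finset M, x e, fun i => Finset.sum_nonneg fun e _ => hx e, ?_⟩
  intro B hB
  rcases B.eq_empty_or_nonempty with rfl | ⟨i, hi⟩
  · simp [Finset.subset_empty, Finset.filter_eq', hx0]
  · calc ∑ e ∈ univ.filter (fun e : Finset M => e ⊆ B), x e
        ≤ ∑ e : Finset M, x e :=
          Finset.sum_le_sum_of_subset_of_nonneg (filter_subset _ _) (fun e _ _ => hx e)
    _ ≤ ∑ _j ∈ B, ∑ e : Finset M, x e :=
        Finset.single_le_sum (fun j _ => Finset.sum_nonneg fun e _ => hx e) hi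

lemma omni_bddBelow (x : Finset M → ℝ) :
    BddBelow {s : ℝ | ∃ r : M → ℝ, OmniFeasible x r ∧ s = ∑ i : M, r i} := by
  refine ⟨0, fun s hs => ?_⟩
  obtain ⟨r, hr, rfl⟩ := hs
  exact Finset.sum_nonneg fun i _ => hr.1 i

lemma RCO_le (x : Finset M → ℝ) (r : M → ℝ) (hr : OmniFeasible x r) :
    RCO x ≤ ∑ i : M, r i :=
  csInf_le (omni_bddBelow x) ⟨r, hr, rfl⟩

lemma omni_closed (x : Finset M → ℝ) : IsClosed {r : M → ℝ | OmniFeasible x r} := by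
  have h1 : IsClosed {r : M → ℝ | ∀ i, 0 ≤ r i} := by
    have h : {r : M → ℝ | ∀ i, 0 ≤ r i} = ⋂ i, {r | 0 ≤ r i} := by ext r; simp
    rw [h]
    exact isClosed_iInter fun i => isClosed_le continuous_const (continuous_apply i)
  have h2 : IsClosed {r : M → ℝ | ∀ B : Finset M, B ⊂ Finset.univ →
      ∑ e ∈ Finset.univ.filter (fun e : Finset M => e ⊆ B), x e ≤ ∑ i ∈ B, r i} := by
    have h : {r : M → ℝ | ∀ B : Finset M, B ⊂ Finset.univ →
        ∑ e ∈ Finset.univ.filter (fun e : Finset M => e ⊆ B), x e ≤ ∑ i ∈ B, r i}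
        = ⋂ B : Finset M, {r | B ⊂ Finset.univ →
        ∑ e ∈ Finset.univ.filter (fun e : Finset M => e ⊆ B), x e ≤ ∑ i ∈ B, r i} := by
      ext r; simp
    rw [h]
    refine isClosed_iInter fun B => ?_
    by_cases hB : B ⊂ Finset.univ
    · simp only [hB, forall_true_left]
      exact isClosed_le continuous_const (continuous_finset_sum _ fun i _ => continuous_apply i)
    · simp [hB]
  have h : {r : M → ℝ | OmniFeasible x r}
      = {r : M → ℝ | ∀ i, 0 ≤ r i} ∩ {r : M → ℝ | ∀ B : Finset M, B ⊂ Finset.univ →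
        ∑ e ∈ Finset.univ.filter (fun e : Finset M => e ⊆ B), x e ≤ ∑ i ∈ B, r i} := rfl
  rw [h]; exact h1.inter h2

lemma RCO_attained (x : Finset M → ℝ) (hx : ∀ e, 0 ≤ x e) (hx0 : x ∅ = 0) :
    ∃ r : M → ℝ, OmniFeasible x r ∧ (∑ i : M, r i) = RCO x := by
  set T := {s : ℝ | ∃ r : M → ℝ, OmniFeasible x r ∧ s = ∑ i : M, r i} with hT
  have hTne : T.Nonempty := by
    obtain ⟨r, hr⟩ := omni_nonempty x hx hx0
    exact ⟨∑ i, r i, r, hr, rfl⟩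
  have hlt : sInf T < RCO x + 1 := by
    have : sInf T = RCO x := rfl
    rw [this]; exact lt_add_one _
  obtain ⟨s, hsT, hs⟩ := exists_lt_of_csInf_lt hTne hlt
  obtain ⟨r₁, hr₁, rfl⟩ := hsT
  set S := {r : M → ℝ | OmniFeasible x r} ∩ Set.Icc (0 : M → ℝ) (fun _ => RCO x + 1) with hS
  have hSc : IsCompact S := (isCompact_Icc).inter_left (omni_closed x)
  have hr₁S : r₁ ∈ S := by
    refine ⟨hr₁, fun i => hr₁.1 i, fun i => ?_⟩
    calc r₁ i ≤ ∑ j : M, r₁ j := Finset.single_le_sum (fun j _ => hr₁.1 j) (mem_univ i)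
    _ ≤ RCO x + 1 := hs.le
  obtain ⟨r₀, hr₀S, hmin⟩ := hSc.exists_isMinOn ⟨r₁, hr₁S⟩
    ((continuous_finset_sum _ fun i _ => continuous_apply i).continuousOn)
  refine ⟨r₀, hr₀S.1, le_antisymm ?_ (RCO_le x r₀ hr₀S.1)⟩
  refine le_csInf hTne ?_
  rintro s ⟨r, hr, rfl⟩
  by_cases hcase : ∑ i, r i ≤ RCO x + 1
  · exact hmin ⟨hr, fun i => hr.1 i, fun i =>
      le_trans (Finset.single_le_sum (fun j _ => hr.1 j) (mem_univ i)) hcase⟩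
  · have h1 : (∑ i, r₀ i) ≤ RCO x + 1 := hmin hr₁S |>.trans hs.le
    linarith [not_le.mp hcase]
end Aux

section Mono
variable {M : Type*} [Fintype M] [DecidableEq M] [Nonempty M]

lemma skCap_mono (w x : Finset M → ℝ) (hw : ∀ e, 0 ≤ w e)
    (hne : ∀ e : Finset M, 0 < w e → e.Nonempty)
    (hx : ∀ e, 0 ≤ x e) (hxw : ∀ e, x e ≤ w e) : skCap x ≤ skCap w := by
  have hw0 : w (∅ : Finset M) = 0 := by
    by_contra h
    exact Finset.not_nonempty_empty (hne ∅ ((hw ∅).lt_of_ne (Ne.symm h)))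
  have hx0 : x (∅ : Finset M) = 0 := le_antisymm (hw0 ▸ hxw ∅) (hx ∅)
  set ch : Finset M → M := fun e => if h : e.Nonempty then h.choose else Classical.arbitrary M
    with hch
  have hchmem : ∀ e : Finset M, e.Nonempty → ch e ∈ e := by
    intro e h; simp only [hch, dif_pos h]; exact h.choose_spec
  have key : ∀ r : M → ℝ, OmniFeasible x r →
      RCO w ≤ (∑ i : M, r i) + ((∑ e : Finset M, w e) - ∑ e : Finset M, x e) := by
    intro r hr
    set r' : M → ℝ := fun i =>
      r i + ∑ e ∈ univ.filter (fun e : Finset M => e.Nonempty ∧ ch e = i), (w e - x e) with hr'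
    have hr'feas : OmniFeasible w r' := by
      constructor
      · intro i
        exact add_nonneg (hr.1 i) (Finset.sum_nonneg fun e _ => sub_nonneg.mpr (hxw e))
      · intro B hB
        have fib := Finset.sum_fiberwise_of_maps_to
          (s := univ.filter (fun e : Finset M => e.Nonempty ∧ ch e ∈ B)) (t := B) (g := ch)
          (fun e he => (Finset.mem_filter.mp he).2.2) (fun e => w e - x e)
        have hfilter : ∀ i ∈ B,
            (univ.filter (fun e : Finset M => e.Nonempty ∧ ch e ∈ B)).filter
              (fun e => ch e = i)
            = univ.filter (fun e : Finset M => e.Nonempty ∧ ch e = i) := by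
          intro i hi; ext e
          simp only [Finset.mem_filter, Finset.mem_univ, true_and]
          constructor
          · rintro ⟨⟨h1, _⟩, h3⟩; exact ⟨h1, h3⟩
          · rintro ⟨h1, h3⟩; exact ⟨⟨h1, h3 ▸ hi⟩, h3⟩
        have fib2 : ∑ i ∈ B, ∑ e ∈ univ.filter (fun e : Finset M => e.Nonempty ∧ ch e = i),
            (w e - x e)
            = ∑ e ∈ univ.filter (fun e : Finset M => e.Nonempty ∧ ch e ∈ B), (w e - x e) := by
          rw [← fib]
          exact Finset.sum_congr rfl fun i hi => by rw [hfilter i hi]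
        have heq : ∑ e ∈ univ.filter (fun e : Finset M => e ⊆ B), (w e - x e)
            = ∑ e ∈ univ.filter (fun e : Finset M => e ⊆ B ∧ e.Nonempty), (w e - x e) := by
          refine (Finset.sum_subset ?_ ?_).symm
          · intro e he
            simp only [Finset.mem_filter, Finset.mem_univ, true_and] at he ⊢
            exact he.1
          · intro e he hne'
            simp only [Finset.mem_filter, Finset.mem_univ, true_and] at he hne'
            rcases e.eq_empty_or_nonempty with rfl | hn
            · rw [hw0, hx0]; ring
            · exact absurd ⟨he, hn⟩ hne'
        have step1 : ∑ e ∈ univ.filter (fun e : Finset M => e ⊆ B), (w e - x e)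
            ≤ ∑ e ∈ univ.filter (fun e : Finset M => e.Nonempty ∧ ch e ∈ B), (w e - x e) := by
          rw [heq]
          refine Finset.sum_le_sum_of_subset_of_nonneg ?_
            (fun e _ _ => sub_nonneg.mpr (hxw e))
          intro e he
          simp only [Finset.mem_filter, Finset.mem_univ, true_and] at he ⊢
          exact ⟨he.2, he.1 (hchmem e he.2)⟩
        have split : ∑ e ∈ univ.filter (fun e : Finset M => e ⊆ B), w e
            = (∑ e ∈ univ.filter (fun e : Finset M => e ⊆ B), x e)
              + ∑ e ∈ univ.filter (fun e : Finset M => e ⊆ B), (w e - x e) := by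
          rw [← Finset.sum_add_distrib]; exact Finset.sum_congr rfl fun e _ => by ring
        calc ∑ e ∈ univ.filter (fun e : Finset M => e ⊆ B), w e
            ≤ (∑ i ∈ B, r i)
              + ∑ e ∈ univ.filter (fun e : Finset M => e.Nonempty ∧ ch e ∈ B), (w e - x e) := by
              rw [split]; exact add_le_add (hr.2 B hB) step1
          _ = ∑ i ∈ B, r' i := by rw [← fib2, hr', ← Finset.sum_add_distrib]
    have hsum : ∑ i : M, r' i
        = (∑ i : M, r i) + ((∑ e : Finset M, w e) - ∑ e : Finset M, x e) := by
      have fib := Finset.sum_fiberwise (s := univ.filter (fun e : Finset M => e.Nonempty))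
        (g := ch) (f := fun e => w e - x e)
      have hfilter : ∀ i : M,
          (univ.filter (fun e : Finset M => e.Nonempty)).filter (fun e => ch e = i)
          = univ.filter (fun e : Finset M => e.Nonempty ∧ ch e = i) := by
        intro i; rw [Finset.filter_filter]
      have h1 : ∑ i : M, ∑ e ∈ univ.filter (fun e : Finset M => e.Nonempty ∧ ch e = i),
          (w e - x e) = ∑ e ∈ univ.filter (fun e : Finset M => e.Nonempty), (w e - x e) := by
        rw [← fib]; exact Finset.sum_congr rfl fun i _ => by rw [hfilter i]
      have h2 : ∑ e ∈ univ.filter (fun e : Finset M => e.Nonempty), (w e - x e)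
          = ∑ e : Finset M, (w e - x e) := by
        refine Finset.sum_subset (Finset.filter_subset _ _) ?_
        intro e _ hne'
        simp only [Finset.mem_filter, Finset.mem_univ, true_and] at hne'
        rcases e.eq_empty_or_nonempty with rfl | hn
        · rw [hw0, hx0]; ring
        · exact absurd hn hne'
      rw [hr', Finset.sum_add_distrib, h1, h2, Finset.sum_sub_distrib]
    calc RCO w ≤ ∑ i : M, r' i := RCO_le w r' hr'feas
      _ = _ := hsum
  have hTne : {s : ℝ | ∃ r : M → ℝ, OmniFeasible x r ∧ s = ∑ i : M, r i}.Nonempty := by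
    obtain ⟨r, hr⟩ := omni_nonempty x hx hx0
    exact ⟨∑ i, r i, r, hr, rfl⟩
  have h2 : RCO w - ((∑ e : Finset M, w e) - ∑ e : Finset M, x e) ≤ RCO x := by
    refine le_csInf hTne ?_
    rintro s ⟨r, hr, rfl⟩
    linarith [key r hr]
  simp only [skCap]
  linarith
end Mono

/-- **Lemma 1, Γ = Γ*.** The set `Γ` of fractional packings `x ≤ w` admitting a
rate vector `r` with `∑_e x e - ∑_i r i = C(w)` equals the set `Γ*` of fractional packings
`x ≤ w` preserving the secret key capacity, `C(x) = C(w)`. -/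
theorem Gamma_eq_GammaStar {M : Type*} [Fintype M] [DecidableEq M]
    (hm : 2 ≤ Fintype.card M)
    (w : Finset M → ℝ) (hw : ∀ e, 0 ≤ w e)
    (hne : ∀ e, 0 < w e → e.Nonempty) :
    {x : Finset M → ℝ | (∀ e, 0 ≤ x e) ∧ (∀ e, x e ≤ w e) ∧
        ∃ r : M → ℝ, OmniFeasible x r ∧
          (∑ e : Finset M, x e) - (∑ i : M, r i) = skCap w} =
    {x : Finset M → ℝ | (∀ e, 0 ≤ x e) ∧ (∀ e, x e ≤ w e) ∧ skCap x = skCap w} := by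
  have hMne : Nonempty M := Fintype.card_pos_iff.mp (by omega)
  have hw0 : w (∅ : Finset M) = 0 := by
    by_contra h
    exact Finset.not_nonempty_empty (hne ∅ ((hw ∅).lt_of_ne (Ne.symm h)))
  ext x
  simp only [Set.mem_setOf_eq]
  constructor
  · rintro ⟨hx, hxw, r, hr, hsum⟩
    refine ⟨hx, hxw, le_antisymm (skCap_mono w x hw hne hx hxw) ?_⟩
    have h1 := RCO_le x r hr
    simp only [skCap] at hsum ⊢
    linarith
  · rintro ⟨hx, hxw, hcap⟩
    have hx0 : x (∅ : Finset M) = 0 := le_antisymm (hw0 ▸ hxw ∅) (hx ∅)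
    obtain ⟨r, hr, hrsum⟩ := RCO_attained x hx hx0
    refine ⟨hx, hxw, r, hr, ?_⟩
    rw [hrsum, ← hcap]
    rfl
end

section
/- Let X_M be a source on a weighted graph G = (M, w) with fundamental partition P* (the finest partition attaining the minimum of I_P(X_M)). If the set Γ of capacity-preserving fractional packings equals {w}, then P* is the singleton partition. Equivalently: if P* is not the singleton partition, there exists a fractional packing x ≤ w with x ≠ w such that the multivariate mutual information of the source with weights x equals that of the source with weights w. -/
/-!
Lowering the weight of a single edge only lowers `I_Q` for the partitions `Q` that the edge
crosses. If `P*` has a part with two or more elements, some edge `e` of positive weight lies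
inside a part of `P*`: otherwise the discrete partition would have the same crossing weight
spread over at least as many parts, so it would also be a minimizer, strictly finer than `P*`.
Every partition crossed by `e` is then not a minimizer, hence has `I_Q > I_{P*}`, and since
there are finitely many partitions, lowering `w e` by a small enough amount keeps `P*` a
minimizer with the same value.
-/

open Finset
open scoped Classical

/-- `I_P(x) = (1/(|P|-1)) ∑_{e ∈ E_P} x e`, `E_P` = edges crossing the partition `P`. -/
noncomputable def IP {M : Type*} [Fintype M] [DecidableEq M] (x : Finset M → ℝ)
    (P : Finpartition (Finset.univ : Finset M)) : ℝ :=
  ((P.parts.card : ℝ) - 1)⁻¹ *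
    ∑ e ∈ Finset.univ.filter (fun e : Finset M => ¬ ∃ A ∈ P.parts, e ⊆ A), x e

/-- Multivariate mutual information `I(x) = min_{|P| ≥ 2} I_P(x)`. -/
noncomputable def MMI {M : Type*} [Fintype M] [DecidableEq M] (x : Finset M → ℝ) : ℝ :=
  sInf {r : ℝ | ∃ P : Finpartition (Finset.univ : Finset M), 2 ≤ P.parts.card ∧ r = IP x P}

open Filter Topology

lemma Finpartition.card_eq_one_of_mem_bot {α : Type*} [DecidableEq α] {s A : Finset α}
    (hA : A ∈ (⊥ : Finpartition s).parts) : #A = 1 := by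
  obtain ⟨a, -, rfl⟩ := Finpartition.mem_bot_iff.1 hA
  exact card_singleton a

lemma exists_pos_forall_le_of_finite {ι : Type*} [Finite ι] {p : ι → Prop} {f : ι → ℝ}
    (hf : ∀ i, p i → 0 < f i) : ∃ ε > 0, ∀ i, p i → ε ≤ f i := by
  have hev : ∀ i, ∀ᶠ ε in 𝓝 (0 : ℝ), p i → ε ≤ f i := fun i => by
    by_cases hi : p i
    · exact (eventually_le_nhds (hf i hi)).mono fun _ hε _ => hε
    · exact .of_forall fun _ h => absurd h hi
  obtain ⟨ε, hεf, hε⟩ :=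
    ((eventually_all.2 hev).filter_mono nhdsWithin_le_nhds |>.and
      (self_mem_nhdsWithin (s := Set.Ioi 0))).exists
  exact ⟨ε, hε, hεf⟩

section Partitions

variable {M : Type*} [Fintype M] [DecidableEq M]

def crossingEdges (P : Finpartition (univ : Finset M)) : Finset (Finset M) :=
  univ.filter fun e => ¬ ∃ A ∈ P.parts, e ⊆ A

@[simp]
lemma mem_crossingEdges {P : Finpartition (univ : Finset M)} {e : Finset M} :
    e ∈ crossingEdges P ↔ ¬ ∃ A ∈ P.parts, e ⊆ A := by
  simp [crossingEdges]

lemma crossingEdges_subset_of_le {P Q : Finpartition (univ : Finset M)} (hPQ : P ≤ Q) :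
    crossingEdges Q ⊆ crossingEdges P := by
  intro e heQ
  rw [mem_crossingEdges] at heQ ⊢
  rintro ⟨A, hA, heA⟩
  obtain ⟨B, hB, hAB⟩ := hPQ hA
  exact heQ ⟨B, hB, heA.trans hAB⟩

lemma IP_eq (x : Finset M → ℝ) (P : Finpartition (univ : Finset M)) :
    IP x P = ((#P.parts : ℝ) - 1)⁻¹ * ∑ e ∈ crossingEdges P, x e :=
  rfl

lemma IP_sub (x y : Finset M → ℝ) (P : Finpartition (univ : Finset M)) :
    IP (x - y) P = IP x P - IP y P := by
  simp only [IP_eq, Pi.sub_apply, sum_sub_distrib, mul_sub]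

lemma IP_single (e : Finset M) (c : ℝ) (P : Finpartition (univ : Finset M)) :
    IP (Pi.single e c) P = if e ∈ crossingEdges P then ((#P.parts : ℝ) - 1)⁻¹ * c else 0 := by
  rw [IP_eq, sum_pi_single', mul_ite, mul_zero]

lemma IP_le_of_le {x : Finset M → ℝ} {P Q : Finpartition (univ : Finset M)} (hQP : Q ≤ P)
    (hP : 2 ≤ #P.parts) (hx : ∀ e, 0 ≤ x e) (hxP : ∀ e ∉ crossingEdges P, x e = 0) :
    IP x Q ≤ IP x P := by
  have hsum : ∑ e ∈ crossingEdges Q, x e = ∑ e ∈ crossingEdges P, x e :=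
    (sum_subset (crossingEdges_subset_of_le hQP) fun e _ he => hxP e he).symm
  have hcard : (#P.parts : ℝ) ≤ #Q.parts := by exact_mod_cast Finpartition.card_mono hQP
  have hP' : (1 : ℝ) < #P.parts := by exact_mod_cast hP
  rw [IP_eq, IP_eq, hsum]
  exact mul_le_mul_of_nonneg_right (inv_anti₀ (by linarith) (by linarith))
    (sum_nonneg fun e _ => hx e)

lemma MMI_eq_IP_of_forall_le {x : Finset M → ℝ} {P : Finpartition (univ : Finset M)}
    (hP : 2 ≤ #P.parts)
    (hmin : ∀ Q : Finpartition (univ : Finset M), 2 ≤ #Q.parts → IP x P ≤ IP x Q) :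
    MMI x = IP x P :=
  IsLeast.csInf_eq ⟨⟨P, hP, rfl⟩, by rintro _ ⟨Q, hQ, rfl⟩; exact hmin Q hQ⟩

variable {w : Finset M → ℝ} {P : Finpartition (univ : Finset M)}

lemma IP_lt_of_mem_crossingEdges
    (hmin : ∀ Q : Finpartition (univ : Finset M), 2 ≤ #Q.parts → IP w P ≤ IP w Q)
    (hfinest : ∀ Q : Finpartition (univ : Finset M), 2 ≤ #Q.parts → IP w Q = IP w P → P ≤ Q)
    {e : Finset M} (heP : e ∉ crossingEdges P) {Q : Finpartition (univ : Finset M)}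
    (hQ : 2 ≤ #Q.parts) (heQ : e ∈ crossingEdges Q) : IP w P < IP w Q :=
  (hmin Q hQ).lt_of_ne fun h => heP (crossingEdges_subset_of_le (hfinest Q hQ h.symm) heQ)

lemma exists_pos_not_mem_crossingEdges (hw : ∀ e, 0 ≤ w e) (hP : 2 ≤ #P.parts)
    (hmin : ∀ Q : Finpartition (univ : Finset M), 2 ≤ #Q.parts → IP w P ≤ IP w Q)
    (hfinest : ∀ Q : Finpartition (univ : Finset M), 2 ≤ #Q.parts → IP w Q = IP w P → P ≤ Q)
    (hbot : P ≠ ⊥) : ∃ e, 0 < w e ∧ e ∉ crossingEdges P := by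
  by_contra! hcross
  have hzero : ∀ e ∉ crossingEdges P, w e = 0 := fun e he =>
    le_antisymm (not_lt.1 fun hpos => he (hcross e hpos)) (hw e)
  have hbot2 : 2 ≤ #(⊥ : Finpartition (univ : Finset M)).parts :=
    hP.trans (Finpartition.card_mono bot_le)
  have hIP : IP w ⊥ = IP w P := (IP_le_of_le bot_le hP hw hzero).antisymm (hmin ⊥ hbot2)
  exact hbot (le_bot_iff.1 (hfinest ⊥ hbot2 hIP))

lemma MMI_sub_single_eq (hP : 2 ≤ #P.parts)
    (hmin : ∀ Q : Finpartition (univ : Finset M), 2 ≤ #Q.parts → IP w P ≤ IP w Q)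
    {e : Finset M} (heP : e ∉ crossingEdges P) {δ : ℝ}
    (hδ : ∀ Q : Finpartition (univ : Finset M), 2 ≤ #Q.parts → e ∈ crossingEdges Q →
      δ ≤ (IP w Q - IP w P) * ((#Q.parts : ℝ) - 1)) :
    MMI (w - Pi.single e δ) = MMI w := by
  have hxP : IP (w - Pi.single e δ) P = IP w P := by
    rw [IP_sub, IP_single, if_neg heP, sub_zero]
  rw [MMI_eq_IP_of_forall_le hP hmin, ← hxP]
  refine MMI_eq_IP_of_forall_le hP fun Q hQ => ?_
  rw [hxP, IP_sub, IP_single]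
  split_ifs with heQ
  · have hQ' : (0 : ℝ) < #Q.parts - 1 := sub_pos.2 (by exact_mod_cast hQ)
    have := hδ Q hQ heQ
    rw [le_sub_iff_add_le', ← le_sub_iff_add_le, inv_mul_le_iff₀ hQ']
    linarith
  · rw [sub_zero]
    exact hmin Q hQ

end Partitions

theorem Gamma_singleton_only_if_typeS_general {M : Type*} [Fintype M] [DecidableEq M]
    (w : Finset M → ℝ) (hw : ∀ e, 0 ≤ w e)
    (Pstar : Finpartition (Finset.univ : Finset M)) (hcard : 2 ≤ Pstar.parts.card)
    (hmin : ∀ Q : Finpartition (Finset.univ : Finset M),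
      2 ≤ Q.parts.card → IP w Pstar ≤ IP w Q)
    (hfinest : ∀ Q : Finpartition (Finset.univ : Finset M),
      2 ≤ Q.parts.card → IP w Q = IP w Pstar → Pstar ≤ Q)
    (hnotS : ¬ ∀ A ∈ Pstar.parts, A.card = 1) :
    ∃ x : Finset M → ℝ, (∀ e, 0 ≤ x e) ∧ (∀ e, x e ≤ w e) ∧ x ≠ w ∧ MMI x = MMI w := by
  have hbot : Pstar ≠ ⊥ := fun h => hnotS fun A hA => Finpartition.card_eq_one_of_mem_bot (h ▸ hA)
  obtain ⟨e, he, heP⟩ := exists_pos_not_mem_crossingEdges hw hcard hmin hfinest hbot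
  obtain ⟨ε, hε, hεQ⟩ := exists_pos_forall_le_of_finite
    (p := fun Q : Finpartition (univ : Finset M) => 2 ≤ #Q.parts ∧ e ∈ crossingEdges Q)
    (f := fun Q => (IP w Q - IP w Pstar) * ((#Q.parts : ℝ) - 1))
    fun Q ⟨hQ, heQ⟩ => mul_pos (sub_pos.2 (IP_lt_of_mem_crossingEdges hmin hfinest heP hQ heQ))
      (sub_pos.2 (by exact_mod_cast hQ))
  set δ := min ε (w e)
  have hδ : 0 < δ := lt_min hε he
  refine ⟨w - Pi.single e δ, fun e' => ?_, fun e' => ?_, fun h => ?_,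
    MMI_sub_single_eq hcard hmin heP fun Q hQ heQ => (min_le_left _ _).trans (hεQ Q ⟨hQ, heQ⟩)⟩
  · rcases eq_or_ne e' e with rfl | he'
    · rw [Pi.sub_apply, Pi.single_eq_same, sub_nonneg]
      exact min_le_right ε (w e')
    · simpa [he'] using hw e'
  · rcases eq_or_ne e' e with rfl | he'
    · simpa using hδ.le
    · simp [he']
  · simpa [hδ.ne'] using congrFun h e

/-- **Lemma 2.** Let `X_M` be a graphical source with fundamental partition
`P*` (minimizer of `I_P`, finest among minimizers). If `P*` is not the singleton partition,
then there is a fractional packing `x ≤ w` with `x ≠ w` preserving the multivariate mutual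
information; equivalently, `Γ = {w}` only if `P*` is the singleton partition. -/
theorem Gamma_singleton_only_if_typeS {M : Type*} [Fintype M] [DecidableEq M]
    (hm : 2 ≤ Fintype.card M)
    (w : Finset M → ℝ) (hw : ∀ e, 0 ≤ w e)
    (h2 : ∀ e, 0 < w e → e.card = 2)
    (Pstar : Finpartition (Finset.univ : Finset M)) (hcard : 2 ≤ Pstar.parts.card)
    (hmin : ∀ Q : Finpartition (Finset.univ : Finset M),
      2 ≤ Q.parts.card → IP w Pstar ≤ IP w Q)
    (hfinest : ∀ Q : Finpartition (Finset.univ : Finset M),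
      2 ≤ Q.parts.card → IP w Q = IP w Pstar → Pstar ≤ Q)
    (hnotS : ¬ ∀ A ∈ Pstar.parts, A.card = 1) :
    ∃ x : Finset M → ℝ, (∀ e, 0 ≤ x e) ∧ (∀ e, x e ≤ w e) ∧ x ≠ w ∧ MMI x = MMI w :=
  Gamma_singleton_only_if_typeS_general w hw Pstar hcard hmin hfinest hnotS
end

section
/- Let G = (M, w) be a weighted graph with fundamental partition P* ≠ S (the singleton partition), let A ∈ P* with an edge ẽ ⊆ A, and let ε = min{I_P(w) − I_{P*}(w) : P ≠ P* and P is not a coarsening of P*} > 0. For any 0 < δ < ε, the fractional packing x with x(ẽ) = w(ẽ) − δ and x(e) = w(e) otherwise satisfies I(x) = I(w), i.e., min over partitions P with |P| ≥ 2 of (1/(|P|−1)) Σ_{e∈E_P} x(e) equals min over such P of (1/(|P|−1)) Σ_{e∈E_P} w(e). -/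
open Finset
open scoped Classical

/-- **key step of Lemma 2.** Let `P* ≠ S` be the fundamental partition of the
weighted graph `(M, w)`, let `ẽ ⊆ A ∈ P*` be an edge inside a cell, and let
`ε = min {I_P(w) - I_{P*}(w) : P ≠ P*, P not a coarsening of P*} > 0`. Then for any
`0 < δ < ε` (with `δ ≤ w ẽ`), the fractional packing `x` with `x ẽ = w ẽ - δ` and
`x e = w e` otherwise satisfies `I(x) = I(w)`. -/
theorem fractional_removal_preserves_MMI {M : Type*} [Fintype M] [DecidableEq M]
    (hm : 2 ≤ Fintype.card M)
    (w : Finset M → ℝ) (hw : ∀ e, 0 ≤ w e)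
    (h2 : ∀ e, 0 < w e → e.card = 2)
    (Pstar : Finpartition (Finset.univ : Finset M)) (hcard : 2 ≤ Pstar.parts.card)
    (hmin : ∀ Q : Finpartition (Finset.univ : Finset M),
      2 ≤ Q.parts.card → IP w Pstar ≤ IP w Q)
    (hfinest : ∀ Q : Finpartition (Finset.univ : Finset M),
      2 ≤ Q.parts.card → IP w Q = IP w Pstar → Pstar ≤ Q)
    (hnotS : ¬ ∀ A ∈ Pstar.parts, A.card = 1)
    (A : Finset M) (hA : A ∈ Pstar.parts)
    (et : Finset M) (het : 0 < w et) (hetA : et ⊆ A)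
    (ε : ℝ)
    (hε : ε = sInf {d : ℝ | ∃ P : Finpartition (Finset.univ : Finset M),
      2 ≤ P.parts.card ∧ P ≠ Pstar ∧ ¬ Pstar ≤ P ∧ d = IP w P - IP w Pstar})
    (hεpos : 0 < ε)
    (δ : ℝ) (hδ0 : 0 < δ) (hδε : δ < ε) (hδw : δ ≤ w et) :
    MMI (fun e => if e = et then w et - δ else w e) = MMI w := by
  set x : Finset M → ℝ := fun e => if e = et then w et - δ else w e with hx
  -- IP x P = IP w P when et inside some part
  have hsame : ∀ P : Finpartition (Finset.univ : Finset M),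
      (∃ B ∈ P.parts, et ⊆ B) → IP x P = IP w P := by
    intro P hB
    unfold IP
    congr 1
    apply Finset.sum_congr rfl
    intro e he
    simp only [mem_filter] at he
    have : e ≠ et := by rintro rfl; exact he.2 hB
    simp [hx, this]
  -- IP x P = IP w P - δ/(card-1) when et crosses
  have hcross : ∀ P : Finpartition (Finset.univ : Finset M),
      (¬ ∃ B ∈ P.parts, et ⊆ B) →
      IP x P = IP w P - ((P.parts.card : ℝ) - 1)⁻¹ * δ := by
    intro P hB
    unfold IP
    have hmem : et ∈ Finset.univ.filter (fun e : Finset M => ¬ ∃ A ∈ P.parts, e ⊆ A) := by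
      simp only [Finset.mem_filter, Finset.mem_univ, true_and]
      exact hB
    rw [← Finset.sum_erase_add _ _ hmem, ← Finset.sum_erase_add _ w hmem]
    have h1 : ∑ e ∈ (Finset.univ.filter (fun e : Finset M => ¬ ∃ A ∈ P.parts, e ⊆ A)).erase et,
        x e = ∑ e ∈ (Finset.univ.filter (fun e : Finset M => ¬ ∃ A ∈ P.parts, e ⊆ A)).erase et,
        w e := by
      apply Finset.sum_congr rfl
      intro e he
      have : e ≠ et := (Finset.mem_erase.mp he).1
      simp [hx, this]
    rw [h1]
    simp only [hx, if_pos rfl]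
    ring
  -- et inside a part of Pstar
  have hetP : ∃ B ∈ Pstar.parts, et ⊆ B := ⟨A, hA, hetA⟩
  have hxPstar : IP x Pstar = IP w Pstar := hsame Pstar hetP
  -- MMI w = IP w Pstar
  have hbdd : ∀ y : Finset M → ℝ, (∀ e, 0 ≤ y e) →
      BddBelow {r : ℝ | ∃ P : Finpartition (Finset.univ : Finset M),
        2 ≤ P.parts.card ∧ r = IP y P} := by
    intro y hy
    refine ⟨0, ?_⟩
    rintro r ⟨P, hP, rfl⟩
    apply mul_nonneg
    · rw [inv_nonneg]
      have : (2 : ℝ) ≤ (P.parts.card : ℝ) := by exact_mod_cast hP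
      linarith
    · exact Finset.sum_nonneg fun e _ => hy e
  have hxnn : ∀ e, 0 ≤ x e := by
    intro e
    by_cases h : e = et
    · simp only [hx, h, if_pos rfl]; linarith
    · simp only [hx, if_neg h]; exact hw e
  have hMMIw : MMI w = IP w Pstar := by
    unfold MMI
    apply le_antisymm
    · exact csInf_le (hbdd w hw) ⟨Pstar, hcard, rfl⟩
    · refine le_csInf ⟨IP w Pstar, Pstar, hcard, rfl⟩ ?_
      rintro r ⟨P, hP, rfl⟩
      exact hmin P hP
  -- key lower bound: IP x P ≥ IP w Pstar for all P with card ≥ 2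
  have hkey : ∀ P : Finpartition (Finset.univ : Finset M),
      2 ≤ P.parts.card → IP w Pstar ≤ IP x P := by
    intro P hP
    by_cases hB : ∃ B ∈ P.parts, et ⊆ B
    · rw [hsame P hB]; exact hmin P hP
    · rw [hcross P hB]
      have hPne : P ≠ Pstar := by rintro rfl; exact hB hetP
      have hPnle : ¬ Pstar ≤ P := by
        intro hle
        obtain ⟨B, hBP, hAB⟩ := hle hA
        exact hB ⟨B, hBP, hetA.trans hAB⟩
      have hmem' : (IP w P - IP w Pstar) ∈ {d : ℝ | ∃ P : Finpartition (Finset.univ : Finset M),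
          2 ≤ P.parts.card ∧ P ≠ Pstar ∧ ¬ Pstar ≤ P ∧ d = IP w P - IP w Pstar} :=
        ⟨P, hP, hPne, hPnle, rfl⟩
      clear hPnle hPne
      have hεle : ε ≤ IP w P - IP w Pstar := by
        rw [hε]
        apply csInf_le _ hmem'
        refine ⟨-IP w Pstar, ?_⟩
        rintro d ⟨Q, hQ, -, -, rfl⟩
        have h0 : 0 ≤ IP w Q := by
          apply mul_nonneg
          · rw [inv_nonneg]
            have : (2 : ℝ) ≤ (Q.parts.card : ℝ) := by exact_mod_cast hQ
            linarith
          · exact Finset.sum_nonneg fun e _ => hw e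
        linarith
      have hinv : ((P.parts.card : ℝ) - 1)⁻¹ ≤ 1 := by
        have h2l : (2 : ℝ) ≤ (P.parts.card : ℝ) := by exact_mod_cast hP
        rw [inv_le_one_iff₀]
        right; linarith
      have hinvpos : 0 < ((P.parts.card : ℝ) - 1)⁻¹ := by
        have h2l : (2 : ℝ) ≤ (P.parts.card : ℝ) := by exact_mod_cast hP
        rw [inv_pos]; linarith
      have : ((P.parts.card : ℝ) - 1)⁻¹ * δ ≤ δ := by
        nlinarith
      linarith
  have hMMIx : MMI x = IP w Pstar := by
    unfold MMI
    apply le_antisymm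
    · exact csInf_le (hbdd x hxnn) ⟨Pstar, hcard, hxPstar.symm⟩
    · refine le_csInf ⟨IP x Pstar, Pstar, hcard, rfl⟩ ?_
      rintro r ⟨P, hP, rfl⟩
      exact hkey P hP
  rw [hMMIx, hMMIw]
end
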